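/- arXiv:math/0509341 — 5 statements merged into one kernel-verified Lean document; each statement's English description precedes it below -/
import Mathlib

section
/- Let w be a smooth radial function on ℝⁿ \ {0}, n ≥ 3, written as a function of r = |x| > 0, and let n/2 < k ≤ n. Suppose that for all r > 0 the numbers b = w'(r)/r − (w'(r))²/2 and a = w''(r) + (w'(r))²/2 satisfy b ≥ 0 and a + ((n−k)/k)·b ≥ 0. Then for all r > 0: 0 ≤ w'(r) ≤ 2/r and w''(r) + w'(r)/r ≥ 0; in particular the function r ↦ r·w'(r) is nonnegative, monotone increasing, and bounded above by 2. -/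
open Set Filter

/-- Radial admissibility conditions for `n/2 < k ≤ n` imply `0 ≤ w' ≤ 2/r`,
`w'' + w'/r ≥ 0`, and hence `r ↦ r w'(r)` is nonnegative, increasing and `≤ 2`. -/
theorem stmt0 (n k : ℕ) (hn : 3 ≤ n) (hk1 : (n : ℝ) / 2 < k) (hk2 : k ≤ n)
    (w w' w'' : ℝ → ℝ)
    (hD1 : ∀ r > (0:ℝ), HasDerivAt w (w' r) r)
    (hD2 : ∀ r > (0:ℝ), HasDerivAt w' (w'' r) r)
    (hb : ∀ r > (0:ℝ), 0 ≤ w' r / r - (w' r) ^ 2 / 2)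
    (ha : ∀ r > (0:ℝ),
      0 ≤ (w'' r + (w' r) ^ 2 / 2) + (((n : ℝ) - k) / k) * (w' r / r - (w' r) ^ 2 / 2)) :
    (∀ r > (0:ℝ), 0 ≤ w' r ∧ w' r ≤ 2 / r ∧ 0 ≤ w'' r + w' r / r) ∧
    (∀ r > (0:ℝ), 0 ≤ r * w' r ∧ r * w' r ≤ 2) ∧
    MonotoneOn (fun r => r * w' r) (Set.Ioi (0:ℝ)) := by
  have hkpos : (0:ℝ) < k := by
    have : (0:ℝ) < n := by positivity
    linarith [hk1, this]
  have hc1 : ((n : ℝ) - k) / k ≤ 1 := by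
    rw [div_le_one hkpos]; linarith
  have hc0 : 0 ≤ ((n : ℝ) - k) / k := by
    apply div_nonneg _ hkpos.le
    have : (k:ℝ) ≤ n := Nat.cast_le.mpr hk2
    linarith
  -- pointwise facts
  have key : ∀ r > (0:ℝ), 0 ≤ w' r ∧ w' r ≤ 2 / r ∧ 0 ≤ w'' r + w' r / r := by
    intro r hr
    have hbr := hb r hr
    have har := ha r hr
    -- multiply hbr by r
    have hbr' : 0 ≤ w' r - r * (w' r) ^ 2 / 2 := by
      have h := mul_nonneg hr.le hbr
      rw [mul_sub, mul_div_cancel₀ _ hr.ne'] at h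
      linarith
    have hw0 : 0 ≤ w' r := by nlinarith [sq_nonneg (w' r), hr]
    have hw2 : w' r ≤ 2 / r := by
      rw [le_div_iff₀ hr]
      nlinarith [hbr', hw0, hr]
    refine ⟨hw0, hw2, ?_⟩
    have hprod : 0 ≤ (1 - ((n : ℝ) - k) / k) * (w' r / r - (w' r) ^ 2 / 2) :=
      mul_nonneg (by linarith) hbr
    nlinarith [har, hprod]
  refine ⟨key, ?_, ?_⟩
  · intro r hr
    obtain ⟨h0, h2, _⟩ := key r hr
    constructor
    · exact mul_nonneg hr.le h0
    · calc r * w' r ≤ r * (2 / r) := by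
            exact mul_le_mul_of_nonneg_left h2 hr.le
        _ = 2 := by field_simp
  · apply monotoneOn_of_deriv_nonneg (convex_Ioi 0)
    · intro x hx
      have hx' : (0:ℝ) < x := hx
      exact (continuousAt_id.mul ((hD2 x hx').differentiableAt.continuousAt)).continuousWithinAt
    · intro x hx
      rw [interior_Ioi] at hx
      exact ((hasDerivAt_id x).mul (hD2 x hx)).differentiableAt.differentiableWithinAt
    · intro x hx
      rw [interior_Ioi] at hx
      have hx' : (0:ℝ) < x := hx
      have hd : HasDerivAt (fun r => r * w' r) (1 * w' x + x * w'' x) x :=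
        (hasDerivAt_id x).mul (hD2 x hx')
      rw [hd.deriv]
      obtain ⟨_, _, h3⟩ := key x hx'
      have h := mul_nonneg hx'.le h3
      rw [mul_add, mul_div_cancel₀ _ hx'.ne'] at h
      linarith
end

section
/- Let w be a C² radial function of r ∈ (0, r₀), and suppose b := w'/r − (w')²/2 ≥ 0 and a := w'' + (w')²/2 ≥ 0 on (0, r₀) (the case k = n). If w'(r) → ∞ as r → 0⁺, then w'(r) = 2/r for all r ∈ (0, r₀), i.e. w(r) = 2 log r + C for some constant C. -/
open Set Filter

/-!
The inequality `b ≥ 0` says `0 ≤ w' ≤ 2/r`. Together with `a ≥ 0` it makes `r w'` nondecreasing,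
since `(r w')' = w' + r w'' ≥ w' (1 - r w'/2) ≥ 0`; as `w'` is positive near `0`, it is then
positive everywhere. Where `w' > 0`, `a ≥ 0` says that `v = r/2 - 1/w'` is nondecreasing, while
`b ≥ 0` says `v ≤ 0`. The blow-up `w' → ∞` gives `v → 0` at `0⁺`, which forces `v ≡ 0`,
i.e. `w' = 2/r`, and integrating gives `w = 2 log r + C`.
-/

lemma monotoneOn_Ioo_of_hasDerivAt_nonneg {a b : ℝ} {f f' : ℝ → ℝ}
    (hf : ∀ x ∈ Ioo a b, HasDerivAt f (f' x) x) (hf' : ∀ x ∈ Ioo a b, 0 ≤ f' x) :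
    MonotoneOn f (Ioo a b) :=
  monotoneOn_of_hasDerivWithinAt_nonneg (convex_Ioo a b)
    (fun x hx => (hf x hx).continuousAt.continuousWithinAt)
    (fun x hx => (hf x (by rwa [interior_Ioo] at hx)).hasDerivWithinAt)
    (fun x hx => hf' x (by rwa [interior_Ioo] at hx))

lemma nonneg_and_mul_le_two_of_div_sub_sq_nonneg {r x : ℝ} (hr : 0 < r)
    (h : 0 ≤ x / r - x ^ 2 / 2) : 0 ≤ x ∧ r * x ≤ 2 := by
  have hprod : 0 ≤ x * (2 - r * x) := by
    have := mul_nonneg h (by positivity : (0 : ℝ) ≤ 2 * r)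
    rwa [show (x / r - x ^ 2 / 2) * (2 * r) = x * (2 - r * x) by field_simp] at this
  have hx : 0 ≤ x := by nlinarith [mul_pos hr hr]
  exact ⟨hx, by nlinarith⟩

lemma monotoneOn_mul_deriv {r₀ : ℝ} {w' w'' : ℝ → ℝ}
    (hD2 : ∀ r ∈ Ioo 0 r₀, HasDerivAt w' (w'' r) r)
    (hb : ∀ r ∈ Ioo 0 r₀, 0 ≤ w' r / r - w' r ^ 2 / 2)
    (ha : ∀ r ∈ Ioo 0 r₀, 0 ≤ w'' r + w' r ^ 2 / 2) :
    MonotoneOn (fun r => r * w' r) (Ioo 0 r₀) := by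
  refine monotoneOn_Ioo_of_hasDerivAt_nonneg (f' := fun r => w' r + r * w'' r)
    (fun r hr => ((hasDerivAt_id r).mul (hD2 r hr)).congr_deriv (by simp)) fun r hr => ?_
  obtain ⟨hw'_nonneg, hw'_le⟩ := nonneg_and_mul_le_two_of_div_sub_sq_nonneg hr.1 (hb r hr)
  calc (0 : ℝ) ≤ w' r * (1 - r * w' r / 2) := mul_nonneg hw'_nonneg (by linarith)
    _ ≤ w' r + r * w'' r := by nlinarith [ha r hr, hr.1]

lemma deriv_pos_of_tendsto_atTop {r₀ : ℝ} {w' w'' : ℝ → ℝ}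
    (hD2 : ∀ r ∈ Ioo 0 r₀, HasDerivAt w' (w'' r) r)
    (hb : ∀ r ∈ Ioo 0 r₀, 0 ≤ w' r / r - w' r ^ 2 / 2)
    (ha : ∀ r ∈ Ioo 0 r₀, 0 ≤ w'' r + w' r ^ 2 / 2)
    (hblow : Tendsto w' (nhdsWithin 0 (Ioi 0)) atTop) {r : ℝ} (hr : r ∈ Ioo 0 r₀) :
    0 < w' r := by
  obtain ⟨t, ht_pos, ht⟩ :=
    ((hblow.eventually (eventually_gt_atTop 0)).and (Ioo_mem_nhdsGT hr.1)).exists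
  have hmono : t * w' t ≤ r * w' r :=
    monotoneOn_mul_deriv hD2 hb ha ⟨ht.1, ht.2.trans hr.2⟩ hr ht.2.le
  exact pos_of_mul_pos_right ((mul_pos ht.1 ht_pos).trans_le hmono) hr.1.le

lemma monotoneOn_half_sub_inv_deriv {r₀ : ℝ} {w' w'' : ℝ → ℝ}
    (hpos : ∀ r ∈ Ioo 0 r₀, 0 < w' r)
    (hD2 : ∀ r ∈ Ioo 0 r₀, HasDerivAt w' (w'' r) r)
    (ha : ∀ r ∈ Ioo 0 r₀, 0 ≤ w'' r + w' r ^ 2 / 2) :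
    MonotoneOn (fun r => r / 2 - (w' r)⁻¹) (Ioo 0 r₀) := by
  refine monotoneOn_Ioo_of_hasDerivAt_nonneg (f' := fun r => 1 / 2 + w'' r / w' r ^ 2)
    (fun r hr => (((hasDerivAt_id r).div_const 2).sub
      ((hD2 r hr).inv (hpos r hr).ne')).congr_deriv (by ring)) fun r hr => ?_
  have hsq : 0 < w' r ^ 2 := pow_pos (hpos r hr) 2
  have : -(1 / 2 : ℝ) ≤ w'' r / w' r ^ 2 := by
    rw [le_div_iff₀ hsq]
    linarith [ha r hr]
  linarith

lemma deriv_eq_two_div {r₀ : ℝ} {w' w'' : ℝ → ℝ}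
    (hD2 : ∀ r ∈ Ioo 0 r₀, HasDerivAt w' (w'' r) r)
    (hb : ∀ r ∈ Ioo 0 r₀, 0 ≤ w' r / r - w' r ^ 2 / 2)
    (ha : ∀ r ∈ Ioo 0 r₀, 0 ≤ w'' r + w' r ^ 2 / 2)
    (hblow : Tendsto w' (nhdsWithin 0 (Ioi 0)) atTop) {r : ℝ} (hr : r ∈ Ioo 0 r₀) :
    w' r = 2 / r := by
  have hpos : ∀ t ∈ Ioo 0 r₀, 0 < w' t := fun t ht => deriv_pos_of_tendsto_atTop hD2 hb ha hblow ht
  have hv_tendsto : Tendsto (fun t => t / 2 - (w' t)⁻¹) (nhdsWithin 0 (Ioi 0)) (nhds 0) := by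
    simpa using ((continuous_id.div_const (2 : ℝ)).tendsto' 0 0 (by simp)).mono_left
      nhdsWithin_le_nhds |>.sub hblow.inv_tendsto_atTop
  have hv_nonneg : 0 ≤ r / 2 - (w' r)⁻¹ := by
    refine le_of_tendsto hv_tendsto ?_
    filter_upwards [Ioo_mem_nhdsGT hr.1] with t ht
    exact monotoneOn_half_sub_inv_deriv hpos hD2 ha ⟨ht.1, ht.2.trans hr.2⟩ hr ht.2.le
  have hmul_le : r * w' r ≤ 2 := (nonneg_and_mul_le_two_of_div_sub_sq_nonneg hr.1 (hb r hr)).2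
  have hw' := hpos r hr
  rw [eq_div_iff hr.1.ne']
  rw [sub_nonneg, inv_le_iff_one_le_mul₀ hw'] at hv_nonneg
  linarith

theorem stmt1_general (r₀ : ℝ) (w w' w'' : ℝ → ℝ)
    (hD1 : ∀ r ∈ Set.Ioo (0:ℝ) r₀, HasDerivAt w (w' r) r)
    (hD2 : ∀ r ∈ Set.Ioo (0:ℝ) r₀, HasDerivAt w' (w'' r) r)
    (hb : ∀ r ∈ Set.Ioo (0:ℝ) r₀, 0 ≤ w' r / r - (w' r) ^ 2 / 2)
    (ha : ∀ r ∈ Set.Ioo (0:ℝ) r₀, 0 ≤ w'' r + (w' r) ^ 2 / 2)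
    (hblow : Tendsto w' (nhdsWithin 0 (Set.Ioi 0)) atTop) :
    (∀ r ∈ Set.Ioo (0:ℝ) r₀, w' r = 2 / r) ∧
    ∃ C : ℝ, ∀ r ∈ Set.Ioo (0:ℝ) r₀, w r = 2 * Real.log r + C := by
  have hw' : ∀ r ∈ Ioo 0 r₀, w' r = 2 / r := fun r hr => deriv_eq_two_div hD2 hb ha hblow hr
  have hlog : ∀ r ∈ Ioo (0 : ℝ) r₀, HasDerivAt (fun t => 2 * Real.log t) (2 / r) r :=
    fun r hr => ((Real.hasDerivAt_log hr.1.ne').const_mul 2).congr_deriv (div_eq_mul_inv 2 r).symm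
  refine ⟨hw', isOpen_Ioo.exists_eq_add_of_deriv_eq isPreconnected_Ioo
    (fun r hr => (hD1 r hr).differentiableAt.differentiableWithinAt)
    (fun r hr => (hlog r hr).differentiableAt.differentiableWithinAt) fun r hr => ?_⟩
  rw [(hD1 r hr).deriv, (hlog r hr).deriv, hw' r hr]

/-- The case `k = n`: if the radial admissibility inequalities `b ≥ 0`, `a ≥ 0` hold on
`(0, r₀)` and `w'(r) → ∞` as `r → 0⁺`, then `w'(r) = 2/r`, i.e. `w = 2 log r + C`. -/
theorem stmt1 (r₀ : ℝ) (hr₀ : 0 < r₀) (w w' w'' : ℝ → ℝ)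
    (hD1 : ∀ r ∈ Set.Ioo (0:ℝ) r₀, HasDerivAt w (w' r) r)
    (hD2 : ∀ r ∈ Set.Ioo (0:ℝ) r₀, HasDerivAt w' (w'' r) r)
    (hb : ∀ r ∈ Set.Ioo (0:ℝ) r₀, 0 ≤ w' r / r - (w' r) ^ 2 / 2)
    (ha : ∀ r ∈ Set.Ioo (0:ℝ) r₀, 0 ≤ w'' r + (w' r) ^ 2 / 2)
    (hblow : Tendsto w' (nhdsWithin 0 (Set.Ioi 0)) atTop) :
    (∀ r ∈ Set.Ioo (0:ℝ) r₀, w' r = 2 / r) ∧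
    ∃ C : ℝ, ∀ r ∈ Set.Ioo (0:ℝ) r₀, w r = 2 * Real.log r + C :=
  stmt1_general r₀ w w' w'' hD1 hD2 hb ha hblow
end

section
/- Let n/2 < k < n and θ = (n−k)/k. Let w : (0, r₀] → ℝ be C² with 0 ≤ r w'(r) ≤ 2, r w'(r) monotone increasing, and suppose c₀ := lim_{r→0⁺} r w'(r) < 2. Then for any c₁ ∈ (c₀, 2) there exist δ > 0 and C > 0 such that w'(r) ≤ C r^{−σ} for 0 < r < δ, where σ = 1 − (1−θ)(1 − c₁/2) < 1, provided w satisfies w'' + w'/r ≥ (1−θ)(w'/r)(1 − r w'/2) on (0, δ). In particular w is bounded near 0. -/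
open Set Filter

/-!
Near `0` the admissibility inequality, multiplied by `r²`, reads
`r (r w')' ≥ (1 - θ) (r w') (1 - r w'/2)`. Once `r w' ≤ c₁` this gives
`r (r w')' ≥ (1 - σ) (r w')`, i.e. `(log (r w' · r^{σ-1}))' ≥ 0`, so `r w' · r^{σ-1}` is
increasing and `w' ≤ C r^{-σ}`. As `σ < 1` this is integrable at `0`; together with `w' ≥ 0`
it traps `w` between `w δ - C δ^{1-σ}/(1-σ)` and `w δ`.
-/

lemma monotoneOn_Ioc_of_hasDerivAt_nonneg {f f' : ℝ → ℝ} {a b : ℝ}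
    (hf : ∀ x ∈ Ioc a b, HasDerivAt f (f' x) x) (hf' : ∀ x ∈ Ioc a b, 0 ≤ f' x) :
    MonotoneOn f (Ioc a b) := by
  have hint : ∀ x ∈ interior (Ioc a b), x ∈ Ioc a b := fun x hx => interior_subset hx
  refine monotoneOn_of_hasDerivWithinAt_nonneg (convex_Ioc a b)
    (fun x hx => (hf x hx).continuousAt.continuousWithinAt)
    (fun x hx => (hf x (hint x hx)).hasDerivWithinAt) (fun x hx => hf' x (hint x hx))

lemma le_mul_rpow_of_mul_le_mul_deriv {g g' : ℝ → ℝ} {a δ : ℝ}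
    (hg : ∀ r ∈ Ioc 0 δ, HasDerivAt g (g' r) r) (h : ∀ r ∈ Ioc 0 δ, a * g r ≤ r * g' r)
    {r : ℝ} (hr : r ∈ Ioc 0 δ) : g r ≤ g δ * δ ^ (-a) * r ^ a := by
  have hderiv : ∀ s ∈ Ioc 0 δ, HasDerivAt (fun s => g s * s ^ (-a))
      (g' s * s ^ (-a) + g s * (-a * s ^ (-a - 1))) s :=
    fun s hs => (hg s hs).mul (Real.hasDerivAt_rpow_const (Or.inl hs.1.ne'))
  have hmono : MonotoneOn (fun s => g s * s ^ (-a)) (Ioc 0 δ) := by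
    refine monotoneOn_Ioc_of_hasDerivAt_nonneg hderiv fun s hs => ?_
    have hs_pow : s ^ (-a) = s ^ (-a - 1) * s := by
      rw [← Real.rpow_add_one hs.1.ne']; ring_nf
    calc (0 : ℝ) ≤ s ^ (-a - 1) * (s * g' s - a * g s) :=
          mul_nonneg (Real.rpow_nonneg hs.1.le _) (sub_nonneg.2 (h s hs))
      _ = _ := by rw [hs_pow]; ring
  have hδ : δ ∈ Ioc 0 δ := right_mem_Ioc.2 (hr.1.trans_le hr.2)
  calc g r = g r * r ^ (-a) * r ^ a := by
        rw [mul_assoc, ← Real.rpow_add hr.1, neg_add_cancel, Real.rpow_zero, mul_one]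
    _ ≤ g δ * δ ^ (-a) * r ^ a :=
        mul_le_mul_of_nonneg_right (hmono hr hδ hr.2) (Real.rpow_nonneg hr.1.le _)

lemma abs_le_of_hasDerivAt_nonneg_le_rpow {f f' : ℝ → ℝ} {C σ δ : ℝ} (hσ : σ < 1)
    (hC : 0 ≤ C) (hf : ∀ r ∈ Ioc 0 δ, HasDerivAt f (f' r) r)
    (hf'₀ : ∀ r ∈ Ioc 0 δ, 0 ≤ f' r) (hf'C : ∀ r ∈ Ioc 0 δ, f' r ≤ C * r ^ (-σ))
    {r : ℝ} (hr : r ∈ Ioc 0 δ) : |f r| ≤ |f δ| + C / (1 - σ) * δ ^ (1 - σ) := by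
  have hδ : δ ∈ Ioc 0 δ := right_mem_Ioc.2 (hr.1.trans_le hr.2)
  have hσ' : (1 - σ) ≠ 0 := (sub_pos.2 hσ).ne'
  set Φ : ℝ → ℝ := fun s => C / (1 - σ) * s ^ (1 - σ)
  have hΦ : ∀ s ∈ Ioc 0 δ, HasDerivAt Φ (C * s ^ (-σ)) s := fun s hs => by
    refine ((Real.hasDerivAt_rpow_const (p := 1 - σ) (Or.inl hs.1.ne')).const_mul
      (C / (1 - σ))).congr_deriv ?_
    rw [sub_sub_cancel_left]; field_simp
  have hΦ₀ : ∀ s ∈ Ioc 0 δ, 0 ≤ Φ s := fun s hs =>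
    mul_nonneg (div_nonneg hC (sub_pos.2 hσ).le) (Real.rpow_nonneg hs.1.le _)
  have hf_le : f r ≤ f δ := monotoneOn_Ioc_of_hasDerivAt_nonneg hf hf'₀ hr hδ hr.2
  have hΦ_sub_f : Φ r - f r ≤ Φ δ - f δ :=
    monotoneOn_Ioc_of_hasDerivAt_nonneg (fun s hs => (hΦ s hs).sub (hf s hs))
      (fun s hs => sub_nonneg.2 (hf'C s hs)) hr hδ hr.2
  rw [abs_le]
  constructor <;> linarith [hΦ₀ r hr, neg_abs_le (f δ), le_abs_self (f δ)]

lemma mul_le_mul_deriv_of_admissible {θ c₁ r x y : ℝ} (hθ : θ < 1) (hr : 0 < r)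
    (hx₀ : 0 ≤ r * x) (hx₁ : r * x ≤ c₁)
    (hadm : (1 - θ) * (x / r) * (1 - r * x / 2) ≤ y + x / r) :
    (1 - θ) * (1 - c₁ / 2) * (r * x) ≤ r * (x + r * y) := by
  have hadm' : (1 - θ) * (r * x) * (1 - r * x / 2) ≤ r * (x + r * y) := by
    have hlhs : r ^ 2 * ((1 - θ) * (x / r) * (1 - r * x / 2))
        = (1 - θ) * (r * x) * (1 - r * x / 2) := by field_simp
    have hrhs : r ^ 2 * (y + x / r) = r * (x + r * y) := by field_simp; ring
    simpa only [hlhs, hrhs] using mul_le_mul_of_nonneg_left hadm (sq_nonneg r)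
  nlinarith [mul_nonneg (mul_nonneg (sub_pos.2 hθ).le hx₀) (sub_nonneg.2 hx₁)]

theorem stmt3_general (n k : ℕ) (hk1 : (n : ℝ) / 2 < k)
    (θ : ℝ) (hθ : θ = ((n : ℝ) - k) / k)
    (r₀ c₀ : ℝ) (hr₀ : 0 < r₀) (w w' w'' : ℝ → ℝ)
    (hD1 : ∀ r ∈ Set.Ioc (0:ℝ) r₀, HasDerivAt w (w' r) r)
    (hD2 : ∀ r ∈ Set.Ioc (0:ℝ) r₀, HasDerivAt w' (w'' r) r)
    (hbound : ∀ r ∈ Set.Ioc (0:ℝ) r₀, 0 ≤ r * w' r ∧ r * w' r ≤ 2)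
    (hlim : Tendsto (fun r => r * w' r) (nhdsWithin 0 (Set.Ioi 0)) (nhds c₀))
    (hineq : ∀ r ∈ Set.Ioc (0:ℝ) r₀,
      (1 - θ) * (w' r / r) * (1 - r * w' r / 2) ≤ w'' r + w' r / r) :
    ∀ c₁ ∈ Set.Ioo c₀ 2, ∃ δ > (0:ℝ), ∃ C > (0:ℝ),
      ((1 : ℝ) - (1 - θ) * (1 - c₁ / 2) < 1) ∧
      (∀ r : ℝ, 0 < r → r < δ →
        w' r ≤ C * r ^ (-(1 - (1 - θ) * (1 - c₁ / 2)))) ∧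
      ∃ M : ℝ, ∀ r : ℝ, 0 < r → r < δ → |w r| ≤ M := by
  rintro c₁ ⟨hc₀c₁, hc₁⟩
  have hk : (0 : ℝ) < k := lt_of_le_of_lt (by positivity) hk1
  have hθ1 : θ < 1 := by rw [hθ, div_lt_one hk]; linarith
  set a := (1 - θ) * (1 - c₁ / 2)
  have ha : 0 < a := mul_pos (sub_pos.2 hθ1) (by linarith)
  obtain ⟨ε, hε, hεc₁⟩ := mem_nhdsGT_iff_exists_Ioc_subset.1 (hlim.eventually_le_const hc₀c₁)
  set δ := min ε r₀
  have hδ : 0 < δ := lt_min hε hr₀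
  have hδr₀ : Ioc 0 δ ⊆ Ioc 0 r₀ := Ioc_subset_Ioc_right (min_le_right _ _)
  have hw'₀ : ∀ r ∈ Ioc 0 δ, 0 ≤ w' r := fun r hr =>
    nonneg_of_mul_nonneg_right (hbound r (hδr₀ hr)).1 hr.1
  set K := δ * w' δ * δ ^ (-a)
  have hK : 0 ≤ K := by have := hw'₀ δ (right_mem_Ioc.2 hδ); positivity
  have hw'_le : ∀ r ∈ Ioc 0 δ, w' r ≤ (K + 1) * r ^ (-(1 - a)) := fun r hr => by
    have hgrowth := le_mul_rpow_of_mul_le_mul_deriv (g := fun s => s * w' s)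
      (g' := fun s => w' s + s * w'' s) (a := a)
      (fun s hs => ((hasDerivAt_id s).mul (hD2 s (hδr₀ hs))).congr_deriv (by simp))
      (fun s hs => mul_le_mul_deriv_of_admissible hθ1 hs.1 (hbound s (hδr₀ hs)).1
        (hεc₁ ⟨hs.1, hs.2.trans (min_le_left _ _)⟩) (hineq s (hδr₀ hs))) hr
    have hr_pow : r ^ a = r * r ^ (-(1 - a)) := by
      rw [Real.rpow_neg hr.1.le, Real.rpow_sub hr.1, Real.rpow_one, inv_div,
        mul_div_cancel₀ _ hr.1.ne']
    rw [hr_pow, ← mul_assoc, mul_comm K r, mul_assoc] at hgrowth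
    exact (le_of_mul_le_mul_left hgrowth hr.1).trans
      (mul_le_mul_of_nonneg_right (by linarith) (Real.rpow_nonneg hr.1.le _))
  refine ⟨δ, hδ, K + 1, by positivity, by linarith, fun r hr hrδ => hw'_le r ⟨hr, hrδ.le⟩,
    _, fun r hr hrδ => abs_le_of_hasDerivAt_nonneg_le_rpow (by linarith) (by positivity)
      (fun s hs => hD1 s (hδr₀ hs)) hw'₀ hw'_le ⟨hr, hrδ.le⟩⟩

/-- For `n/2 < k < n`, `θ = (n-k)/k`: if `0 ≤ r w' ≤ 2`, `r w'` is increasing with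
limit `c₀ < 2` at `0⁺`, and `w'' + w'/r ≥ (1-θ)(w'/r)(1 - r w'/2)`, then for every
`c₁ ∈ (c₀, 2)` one has `w' ≤ C r^{-σ}` near `0`, with `σ = 1-(1-θ)(1-c₁/2) < 1`;
in particular `w` is bounded near `0`. -/
theorem stmt3 (n k : ℕ) (hk1 : (n : ℝ) / 2 < k) (hk2 : k < n)
    (θ : ℝ) (hθ : θ = ((n : ℝ) - k) / k)
    (r₀ c₀ : ℝ) (hr₀ : 0 < r₀) (w w' w'' : ℝ → ℝ)
    (hD1 : ∀ r ∈ Set.Ioc (0:ℝ) r₀, HasDerivAt w (w' r) r)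
    (hD2 : ∀ r ∈ Set.Ioc (0:ℝ) r₀, HasDerivAt w' (w'' r) r)
    (hbound : ∀ r ∈ Set.Ioc (0:ℝ) r₀, 0 ≤ r * w' r ∧ r * w' r ≤ 2)
    (hmono : MonotoneOn (fun r => r * w' r) (Set.Ioc (0:ℝ) r₀))
    (hlim : Tendsto (fun r => r * w' r) (nhdsWithin 0 (Set.Ioi 0)) (nhds c₀))
    (hc₀ : c₀ < 2)
    (hineq : ∀ r ∈ Set.Ioc (0:ℝ) r₀,
      (1 - θ) * (w' r / r) * (1 - r * w' r / 2) ≤ w'' r + w' r / r) :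
    ∀ c₁ ∈ Set.Ioo c₀ 2, ∃ δ > (0:ℝ), ∃ C > (0:ℝ),
      ((1 : ℝ) - (1 - θ) * (1 - c₁ / 2) < 1) ∧
      (∀ r : ℝ, 0 < r → r < δ →
        w' r ≤ C * r ^ (-(1 - (1 - θ) * (1 - c₁ / 2)))) ∧
      ∃ M : ℝ, ∀ r : ℝ, 0 < r → r < δ → |w r| ≤ M :=
  stmt3_general n k hk1 θ hθ r₀ c₀ hr₀ w w' w'' hD1 hD2 hbound hlim hineq
end

section
/- Let λ ∈ Γ_k ⊂ ℝⁿ where Γ_k = {λ : σ_j(λ) > 0 for j = 1,…,k} and 1 ≤ k ≤ n. Then for every i ∈ {1,…,n}, λ_i > −δ·(λ_1 + ⋯ + λ_n) with δ = (n−k)/(n(k−1)) (for k ≥ 2). Equivalently, Γ_k ⊆ Σ_δ where Σ_δ = {λ ∈ ℝⁿ : λ_i > −δ ∑_j λ_j for all i}. -/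
open Set Filter

/-- The `j`-th elementary symmetric polynomial of `l : Fin n → ℝ`. -/
noncomputable def esymm (n j : ℕ) (l : Fin n → ℝ) : ℝ :=
  ∑ s ∈ Finset.powersetCard j (Finset.univ : Finset (Fin n)), ∏ i ∈ s, l i

/-- The Gårding cone `Γ_k = {λ : σ_j(λ) > 0, j = 1, …, k}`. -/
def GammaCone (n k : ℕ) : Set (Fin n → ℝ) :=
  {l | ∀ j : ℕ, 1 ≤ j → j ≤ k → 0 < esymm n j l}

/-!
Write `λ = (a, μ)`, so that `σ_j(λ) = σ_j(μ) + a σ_{j-1}(μ)`. Newton's inequalities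
`E_{j-1} E_{j+1} ≤ E_j²` for the means `E_j = σ_j(μ) / C(m, j)` hold for every real tuple: they say
that the scaled coefficients of the real-rooted polynomial `∏ (X + μ_i)` are log-concave, and since
differentiation and reversal preserve real-rootedness (Rolle), they reduce to the discriminant of a
quadratic. Newton gives `μ ∈ Γ_{k-1}`: at the first `j` with `σ_j(μ) ≤ 0`, positivity of
`σ_j(λ)` and `σ_{j+1}(λ)` would force `σ_{j-1}(μ) σ_{j+1}(μ) > σ_j(μ)²`. Chaining Newton gives
`E_k ≤ E_1 E_{k-1}` on `Γ_k`. If `σ_k(μ) ≤ 0`, then `a σ_{k-1}(μ) > 0` forces `a > 0`; otherwise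
inserting `E_k ≤ E_1 E_{k-1}` into `0 < σ_k(μ) + a σ_{k-1}(μ)` gives `n(k-1) a + (n-k) σ_1(λ) > 0`.
-/

open Polynomial

namespace Polynomial

variable {K : Type*} [Field K]

theorem Splits.reverse {p : K[X]} (hp : p.Splits) : p.reverse.Splits := by
  induction hp using Submonoid.closure_induction with
  | mem f hf =>
    refine .of_natDegree_le_one ((reverse_natDegree_le f).trans ?_)
    rcases hf with ⟨a, rfl⟩ | ⟨a, rfl⟩ <;> simp
  | one => rw [← C_1, reverse_C]; exact .C 1
  | mul f g _ _ hf hg => rw [reverse_mul_of_domain]; exact hf.mul hg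

theorem Splits.derivative {p : ℝ[X]} (hp : p.Splits) : p.derivative.Splits := by
  rw [splits_iff_card_roots] at hp ⊢
  have := card_roots_le_derivative p
  have := card_roots' p.derivative
  rw [natDegree_derivative] at *
  omega

noncomputable def scaledCoeff (p : K[X]) (i : ℕ) : K := p.coeff i / p.natDegree.choose i

theorem scaledCoeff_derivative [CharZero K] (p : K[X]) (i : ℕ) :
    (derivative p).scaledCoeff i = p.natDegree * p.scaledCoeff (i + 1) := by
  rcases lt_or_ge p.natDegree (i + 1) with hi | hi
  · simp [scaledCoeff, coeff_derivative, coeff_eq_zero_of_natDegree_lt hi]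
  obtain ⟨d, hd⟩ : ∃ d, p.natDegree = d + 1 := ⟨p.natDegree - 1, by omega⟩
  have hchoose : ((d + 1 : ℕ) : K) * d.choose i = (d + 1).choose (i + 1) * (i + 1) := by
    exact_mod_cast Nat.add_one_mul_choose_eq d i
  have h1 : (d.choose i : K) ≠ 0 := by exact_mod_cast (Nat.choose_pos (by omega)).ne'
  have h2 : ((d + 1).choose (i + 1) : K) ≠ 0 := by exact_mod_cast (Nat.choose_pos (by omega)).ne'
  simp only [scaledCoeff, natDegree_derivative, coeff_derivative, hd, Nat.add_sub_cancel]
  field_simp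
  linear_combination (-p.coeff (i + 1)) * hchoose

theorem natDegree_reverse_of_coeff_zero_ne_zero {p : K[X]} (h0 : p.coeff 0 ≠ 0) :
    p.reverse.natDegree = p.natDegree := by
  rw [reverse_natDegree, natTrailingDegree_eq_zero.mpr (.inr h0), Nat.sub_zero]

theorem scaledCoeff_reverse {p : K[X]} (h0 : p.coeff 0 ≠ 0) {i : ℕ} (hi : i ≤ p.natDegree) :
    p.reverse.scaledCoeff i = p.scaledCoeff (p.natDegree - i) := by
  rw [scaledCoeff, scaledCoeff, natDegree_reverse_of_coeff_zero_ne_zero h0, coeff_reverse,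
    revAt_le hi, Nat.choose_symm hi]

theorem Splits.scaledCoeff_mul_le_sq_of_natDegree_eq_two {p : ℝ[X]} (hp : p.Splits)
    (hd : p.natDegree = 2) : p.scaledCoeff 0 * p.scaledCoeff 2 ≤ p.scaledCoeff 1 ^ 2 := by
  obtain ⟨r, u, hru⟩ := Multiset.card_eq_two.mp (hd ▸ splits_iff_card_roots.mp hp)
  have hfac := hp.eq_prod_roots
  rw [hru] at hfac
  set c := p.leadingCoeff
  have hq : p = C c * X ^ 2 - C (c * (r + u)) * X + C (c * (r * u)) := by
    rw [hfac]
    simp only [Multiset.insert_eq_cons, Multiset.map_cons, Multiset.prod_cons,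
      Multiset.map_singleton, Multiset.prod_singleton, map_add, map_mul]
    ring
  have h0 : p.coeff 0 = c * (r * u) := by simp [hq]
  have h1 : p.coeff 1 = -(c * (r + u)) := by simp [hq]
  have h2 : p.coeff 2 = c := by simp [hq]
  rw [scaledCoeff, scaledCoeff, scaledCoeff, hd, h0, h1, h2, Nat.choose_zero_right,
    Nat.choose_self, Nat.choose_one_right, Nat.cast_one, div_one, div_one, Nat.cast_ofNat]
  nlinarith [sq_nonneg (c * (r - u))]

theorem Splits.scaledCoeff_mul_le_sq {p : ℝ[X]} (hp : p.Splits) {c : ℕ}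
    (hc : c + 2 ≤ p.natDegree) :
    p.scaledCoeff c * p.scaledCoeff (c + 2) ≤ p.scaledCoeff (c + 1) ^ 2 := by
  induction hd : p.natDegree using Nat.strong_induction_on generalizing p c with
  | _ d ih =>
  have of_derivative : ∀ q : ℝ[X], q.Splits → q.natDegree = d → ∀ c, c + 3 ≤ d →
      q.scaledCoeff (c + 1) * q.scaledCoeff (c + 3) ≤ q.scaledCoeff (c + 2) ^ 2 := by
    intro q hq hqd c hc
    have h := ih (d - 1) (by omega) hq.derivative (c := c)
      (by rw [natDegree_derivative, hqd]; omega) (by rw [natDegree_derivative, hqd])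
    simp only [scaledCoeff_derivative, hqd] at h
    rw [mul_mul_mul_comm, ← sq, mul_pow] at h
    exact le_of_mul_le_mul_left h (pow_pos (by exact_mod_cast (by omega : 0 < d)) 2)
  cases c with
  | succ c => exact of_derivative p hp hd c (by omega)
  | zero =>
    obtain h2 | ⟨e, rfl⟩ : d = 2 ∨ ∃ e, d = e + 3 := by
      rcases Nat.lt_or_ge d 3 with h | h
      · left; omega
      · right; exact ⟨d - 3, by omega⟩
    · exact hp.scaledCoeff_mul_le_sq_of_natDegree_eq_two (hd.trans h2)
    by_cases h0 : p.coeff 0 = 0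
    · rw [scaledCoeff, h0, zero_div, zero_mul]
      positivity
    have h := of_derivative p.reverse hp.reverse
      ((natDegree_reverse_of_coeff_zero_ne_zero h0).trans hd) e le_rfl
    rw [scaledCoeff_reverse h0 (by omega), scaledCoeff_reverse h0 (by omega),
      scaledCoeff_reverse h0 (by omega), hd, show e + 3 - (e + 1) = 2 by omega,
      show e + 3 - (e + 3) = 0 by omega, show e + 3 - (e + 2) = 1 by omega] at h
    linarith

end Polynomial

theorem Nat.choose_mul_choose_add_two_le_sq (m j : ℕ) :
    m.choose j * m.choose (j + 2) ≤ m.choose (j + 1) ^ 2 := by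
  have h1 := Nat.choose_succ_right_eq m j
  have h2 := Nat.choose_succ_right_eq m (j + 1)
  rcases Nat.lt_or_ge m (j + 2) with hm | hm
  · simp [Nat.choose_eq_zero_of_lt hm]
  obtain ⟨t, rfl⟩ : ∃ t, m = j + 2 + t := ⟨m - (j + 2), by omega⟩
  rw [show j + 2 + t - j = t + 2 by omega] at h1
  rw [show j + 2 + t - (j + 1) = t + 1 by omega] at h2
  nlinarith

namespace Multiset

variable {R : Type*} [CommSemiring R]

theorem esymm_zero (s : Multiset R) : s.esymm 0 = 1 := by
  simp [esymm]

theorem esymm_one (s : Multiset R) : s.esymm 1 = s.sum := by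
  simp [esymm, powersetCard_one, map_map]

theorem esymm_eq_zero_of_card_lt {s : Multiset R} {j : ℕ} (h : card s < j) : s.esymm j = 0 := by
  simp [esymm, powersetCard_eq_empty _ h]

theorem esymm_cons_succ (a : R) (s : Multiset R) (j : ℕ) :
    (a ::ₘ s).esymm (j + 1) = s.esymm (j + 1) + a * s.esymm j := by
  simp only [esymm, powersetCard_cons, map_add, sum_add, map_map, Function.comp_def, prod_cons]
  rw [← sum_map_mul_left]

noncomputable def esymmMean (s : Multiset ℝ) (j : ℕ) : ℝ := s.esymm j / (card s).choose j

theorem natDegree_prod_X_add_C (s : Multiset R) [Nontrivial R] :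
    (s.map (X + C ·)).prod.natDegree = card s := by
  rw [natDegree_multiset_prod_of_monic _ (by simp [monic_X_add_C])]
  simp

theorem scaledCoeff_prod_X_add_C (s : Multiset ℝ) {k : ℕ} (hk : k ≤ card s) :
    (s.map (X + C ·)).prod.scaledCoeff k = s.esymmMean (card s - k) := by
  rw [scaledCoeff, natDegree_prod_X_add_C, prod_X_add_C_coeff s hk, esymmMean, Nat.choose_symm hk]

theorem esymmMean_mul_le_sq (s : Multiset ℝ) {j : ℕ} (hj : j + 2 ≤ card s) :
    s.esymmMean j * s.esymmMean (j + 2) ≤ s.esymmMean (j + 1) ^ 2 := by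
  have hsplit : (s.map (X + C ·)).prod.Splits := .multisetProd (by simp [Splits.X_add_C])
  have h := hsplit.scaledCoeff_mul_le_sq (c := card s - (j + 2))
    (by rw [natDegree_prod_X_add_C]; omega)
  rw [scaledCoeff_prod_X_add_C s (by omega), scaledCoeff_prod_X_add_C s (by omega),
    scaledCoeff_prod_X_add_C s (by omega), show card s - (card s - (j + 2)) = j + 2 by omega,
    show card s - (card s - (j + 2) + 2) = j by omega,
    show card s - (card s - (j + 2) + 1) = j + 1 by omega] at h
  linarith

theorem esymm_mul_le_sq (s : Multiset ℝ) (j : ℕ) :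
    s.esymm j * s.esymm (j + 2) ≤ s.esymm (j + 1) ^ 2 := by
  rcases lt_or_ge (card s) (j + 2) with h | h
  · rw [esymm_eq_zero_of_card_lt h, mul_zero]
    positivity
  have hN := s.esymmMean_mul_le_sq h
  have hc : ((card s).choose j : ℝ) * (card s).choose (j + 2) ≤ (card s).choose (j + 1) ^ 2 := by
    exact_mod_cast Nat.choose_mul_choose_add_two_le_sq (card s) j
  have hc0 : (0 : ℝ) < (card s).choose j := by exact_mod_cast Nat.choose_pos (by omega)
  have hc1 : (0 : ℝ) < (card s).choose (j + 1) := by exact_mod_cast Nat.choose_pos (by omega)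
  have hc2 : (0 : ℝ) < (card s).choose (j + 2) := by exact_mod_cast Nat.choose_pos h
  rw [esymmMean, esymmMean, esymmMean, div_mul_div_comm, div_pow,
    div_le_div_iff₀ (by positivity) (by positivity)] at hN
  refine le_of_mul_le_mul_right ?_ (pow_pos hc1 2)
  nlinarith [mul_le_mul_of_nonneg_left hc (sq_nonneg (s.esymm (j + 1)))]

def InGardingCone (k : ℕ) (s : Multiset ℝ) : Prop :=
  ∀ j, 1 ≤ j → j ≤ k → 0 < s.esymm j

namespace InGardingCone

variable {k : ℕ} {s : Multiset ℝ}

theorem mono (h : s.InGardingCone k) {j : ℕ} (hjk : j ≤ k) : s.InGardingCone j :=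
  fun i hi hij => h i hi (hij.trans hjk)

theorem succ (h : s.InGardingCone k) (hk : 0 < s.esymm (k + 1)) : s.InGardingCone (k + 1) := by
  intro j hj hjk
  rcases hjk.lt_or_eq with hjk | rfl
  exacts [h j hj (by omega), hk]

theorem esymm_pos (h : s.InGardingCone k) {j : ℕ} (hjk : j ≤ k) : 0 < s.esymm j := by
  rcases j with _ | j
  · simp [esymm_zero]
  · exact h _ (by omega) hjk

theorem le_card (h : s.InGardingCone k) : k ≤ card s := by
  by_contra! hk
  exact (h.esymm_pos le_rfl).ne' (esymm_eq_zero_of_card_lt hk)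

theorem esymmMean_pos (h : s.InGardingCone k) {j : ℕ} (hjk : j ≤ k) : 0 < s.esymmMean j :=
  div_pos (h.esymm_pos hjk) (by exact_mod_cast Nat.choose_pos (hjk.trans h.le_card))

theorem of_cons {a : ℝ} (h : (a ::ₘ s).InGardingCone (k + 1)) : s.InGardingCone k := by
  suffices ∀ j ≤ k, 0 < s.esymm j from fun j _ hjk => this j hjk
  intro j hjk
  induction j with
  | zero => simp [esymm_zero]
  | succ j ih =>
    have h1 := h.esymm_pos (j := j + 1) (by omega)
    have h2 := h.esymm_pos (j := j + 2) (by omega)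
    rw [esymm_cons_succ] at h1 h2
    have hN := s.esymm_mul_le_sq j
    have hj := ih (by omega)
    by_contra! hneg
    have hsq : s.esymm (j + 1) ^ 2 ≤ -(a * s.esymm j) * s.esymm (j + 1) := by nlinarith
    nlinarith [mul_pos hj h2]

theorem esymmMean_succ_le {j : ℕ} (h : s.InGardingCone (j + 1)) :
    s.esymmMean (j + 1) ≤ s.esymmMean 1 * s.esymmMean j := by
  induction j with
  | zero => simp [esymmMean, esymm_zero]
  | succ j ih =>
    have hN := s.esymmMean_mul_le_sq (j := j) h.le_card
    have hj := h.esymmMean_pos (j := j) (by omega)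
    have hj1 := h.esymmMean_pos (j := j + 1) (by omega)
    have hrec := mul_le_mul_of_nonneg_left (ih (h.mono (by omega))) hj1.le
    refine le_of_mul_le_mul_left ?_ hj
    nlinarith

theorem mul_esymm_succ_le {j : ℕ} (h : s.InGardingCone (j + 1)) :
    (j + 1) * card s * s.esymm (j + 1) ≤ (card s - j) * s.sum * s.esymm j := by
  have hjm := h.le_card
  have hbin : ((card s).choose (j + 1) : ℝ) * (j + 1) = (card s).choose j * (card s - j) := by
    rw [← Nat.cast_sub (by omega)]
    exact_mod_cast Nat.choose_succ_right_eq (card s) j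
  have hc0 : (0 : ℝ) < (card s).choose j := by exact_mod_cast Nat.choose_pos (by omega)
  have hc1 : (0 : ℝ) < (card s).choose (j + 1) := by exact_mod_cast Nat.choose_pos hjm
  have hm : (0 : ℝ) < card s := by exact_mod_cast (by omega : 0 < card s)
  have hmj : (0 : ℝ) ≤ card s - j := sub_nonneg.mpr (by exact_mod_cast (by omega : j ≤ card s))
  have hE := mul_le_mul_of_nonneg_left h.esymmMean_succ_le
    (by positivity : (0 : ℝ) ≤ (card s - j) * (card s).choose j * card s)
  simp only [esymmMean, esymm_one, Nat.choose_one_right] at hE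
  field_simp at hE
  refine le_of_mul_le_mul_right ?_ hc1
  linear_combination hE + (card s * s.esymm (j + 1)) * hbin

theorem pucci_bound (h : s.InGardingCone k) (hk : 2 ≤ k) {a : ℝ} (ha : a ∈ s) :
    0 < card s * (k - 1) * a + (card s - k) * s.sum := by
  obtain ⟨j, rfl⟩ : ∃ j, k = j + 2 := ⟨k - 2, by omega⟩
  rw [← cons_erase ha] at h ⊢
  set t := s.erase a
  have ht : t.InGardingCone (j + 1) := h.of_cons
  have hj := ht.esymm_pos le_rfl
  have hsum : 0 < a + t.sum := by
    simpa only [esymm_one, sum_cons] using h.esymm_pos (j := 1) (by omega)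
  have hcons : 0 < t.esymm (j + 2) + a * t.esymm (j + 1) := by
    have := h.esymm_pos le_rfl
    rwa [esymm_cons_succ] at this
  have hcard : (j : ℝ) + 2 ≤ card t + 1 := by
    have := h.le_card
    rw [card_cons] at this
    exact_mod_cast this
  simp only [card_cons, sum_cons, Nat.cast_add, Nat.cast_one, Nat.cast_ofNat]
  by_cases hpos : 0 < t.esymm (j + 2)
  · have ht' := ht.succ hpos
    have hratio :
        (j + 2) * card t * t.esymm (j + 2) ≤ (card t - (j + 1)) * t.sum * t.esymm (j + 1) := by
      have := ht'.mul_esymm_succ_le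
      push_cast at this
      linarith
    have hm : (j : ℝ) + 2 ≤ card t := by exact_mod_cast ht'.le_card
    have hm0 : (0 : ℝ) < (j + 2) * card t := mul_pos (by positivity) (by linarith)
    refine pos_of_mul_pos_right (a := t.esymm (j + 1)) ?_ hj.le
    nlinarith [mul_pos hm0 hcons]
  · have ha : 0 < a := pos_of_mul_pos_left (by linarith) hj.le
    have hm0 : (0 : ℝ) < (card t + 1) * (j + 1) := by positivity
    nlinarith [mul_nonneg (by linarith : (0 : ℝ) ≤ card t + 1 - (j + 2)) hsum.le, mul_pos hm0 ha]

end InGardingCone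

end Multiset

theorem stmt4_general (n k : ℕ) (hk : 2 ≤ k) (l : Fin n → ℝ)
    (hl : l ∈ GammaCone n k) :
    ∀ i : Fin n, -(((n : ℝ) - k) / (n * ((k : ℝ) - 1))) * (∑ j, l j) < l i := by
  intro i
  have hs : (Finset.univ.val.map l).InGardingCone k := fun j hj hjk => by
    rw [Finset.esymm_map_val]
    exact hl j hj hjk
  have hpucci := hs.pucci_bound hk (Multiset.mem_map_of_mem l (Finset.mem_univ_val i))
  rw [← Finset.sum_eq_multiset_sum, Multiset.card_map, Finset.card_val, Finset.card_univ,
    Fintype.card_fin] at hpucci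
  have hden : (0 : ℝ) < n * (k - 1) := by
    have hn : 2 ≤ n := by simpa using hk.trans hs.le_card
    have hk' : (2 : ℝ) ≤ k := by exact_mod_cast hk
    exact mul_pos (by exact_mod_cast (by omega : 0 < n)) (by linarith)
  rw [neg_mul, neg_lt_iff_pos_add, div_mul_eq_mul_div, add_div' _ _ _ hden.ne']
  exact div_pos (by linarith [hpucci]) hden

/-- `Γ_k ⊆ Σ_δ` with `δ = (n-k)/(n(k-1))`: every `λ ∈ Γ_k` satisfies
`λ_i > -δ ∑_j λ_j` for all `i`. -/
theorem stmt4 (n k : ℕ) (hk : 2 ≤ k) (hkn : k ≤ n) (l : Fin n → ℝ)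
    (hl : l ∈ GammaCone n k) :
    ∀ i : Fin n, -(((n : ℝ) - k) / (n * ((k : ℝ) - 1))) * (∑ j, l j) < l i :=
  stmt4_general n k hk l hl
end

section
/- Let n/2 < k ≤ n and λ ∈ ℝⁿ with λ₁ = ⋯ = λ_{n−1} = b, λₙ = a, and suppose λ ∈ Γ̄_k. Then b ≥ 0 and a + ((n−k)/k)·b ≥ 0. -/
/-!
Every `σ_j` with `j ≤ k` is positive on `Γ_k`, hence nonnegative on its closure. For
`λ = (b, …, b, a)` one has `j σ_j = C(n-1, j-1) b^(j-1) (j a + (n-j) b)`. Since `k > n/2 ≥ 1`,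
both `σ₁ = a + (n-1) b` and `2σ₂ = (n-1) b (2a + (n-2) b)` are nonnegative, which forces `b ≥ 0`.
Then `σ_k ≥ 0` gives `k a + (n-k) b ≥ 0` when `b > 0`, and `σ₁ = a ≥ 0` when `b = 0`.
-/

open Set Filter

theorem Finset.sum_powersetCard_succ_insert {α M : Type*} [DecidableEq α] [AddCommMonoid M]
    {x : α} {s : Finset α} (hx : x ∉ s) (j : ℕ) (f : Finset α → M) :
    ∑ t ∈ (insert x s).powersetCard (j + 1), f t =
      ∑ t ∈ s.powersetCard (j + 1), f t + ∑ t ∈ s.powersetCard j, f (insert x t) := by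
  have hdisj : Disjoint (s.powersetCard (j + 1)) ((s.powersetCard j).image (insert x)) := by
    refine Finset.disjoint_left.2 fun t ht ht' => ?_
    obtain ⟨u, -, rfl⟩ := Finset.mem_image.1 ht'
    exact hx ((Finset.mem_powersetCard.1 ht).1 (Finset.mem_insert_self x u))
  have hinj : Set.InjOn (insert x) (s.powersetCard j : Set (Finset α)) := fun t ht u hu htu => by
    have hxt : x ∉ t := fun h => hx ((Finset.mem_powersetCard.1 ht).1 h)
    have hxu : x ∉ u := fun h => hx ((Finset.mem_powersetCard.1 hu).1 h)
    rw [← Finset.erase_insert hxt, htu, Finset.erase_insert hxu]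
  rw [Finset.powersetCard_succ_insert hx, Finset.sum_union hdisj, Finset.sum_image hinj]

theorem continuous_esymm (n j : ℕ) : Continuous (esymm n j) :=
  continuous_finsetSum _ fun _ _ => continuous_finsetProd _ fun i _ => continuous_apply i

theorem esymm_nonneg_of_mem_closure_gammaCone {n k j : ℕ} {l : Fin n → ℝ}
    (hl : l ∈ closure (GammaCone n k)) (hj : 1 ≤ j) (hjk : j ≤ k) : 0 ≤ esymm n j l :=
  closure_minimal (fun _ hx => (hx j hj hjk).le)
    (isClosed_le continuous_const (continuous_esymm n j)) hl

section OneDistinctEntry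

variable {n : ℕ} {a b : ℝ} {l : Fin n → ℝ} {m : Fin n}

theorem esymm_succ_of_eq_off (hb : ∀ i, i ≠ m → l i = b) (ha : l m = a) (j : ℕ) :
    esymm n (j + 1) l = (n - 1).choose (j + 1) * b ^ (j + 1) + (n - 1).choose j * (a * b ^ j) := by
  classical
  have hcard : (Finset.univ.erase m).card = n - 1 := by simp
  have hprod : ∀ i, ∀ t ∈ (Finset.univ.erase m).powersetCard i, ∏ x ∈ t, l x = b ^ i := by
    intro i t ht
    obtain ⟨hsub, rfl⟩ := Finset.mem_powersetCard.1 ht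
    exact Finset.prod_eq_pow_card fun x hx => hb x (Finset.ne_of_mem_erase (hsub hx))
  have hm : m ∉ Finset.univ.erase m := Finset.notMem_erase m _
  have hinsert : ∑ t ∈ (Finset.univ.erase m).powersetCard j, ∏ x ∈ insert m t, l x =
      ∑ t ∈ (Finset.univ.erase m).powersetCard j, a * b ^ j := Finset.sum_congr rfl fun t ht => by
    rw [Finset.prod_insert fun h => hm ((Finset.mem_powersetCard.1 ht).1 h), ha, hprod j t ht]
  rw [esymm, ← Finset.insert_erase (Finset.mem_univ m), Finset.sum_powersetCard_succ_insert hm,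
    Finset.sum_congr rfl (hprod (j + 1)), hinsert]
  simp [hcard]

theorem succ_mul_esymm_succ_of_eq_off (hb : ∀ i, i ≠ m → l i = b) (ha : l m = a) {j : ℕ}
    (hj : j < n) :
    ((j : ℝ) + 1) * esymm n (j + 1) l =
      (n - 1).choose j * b ^ j * ((j + 1) * a + (n - (j + 1)) * b) := by
  have hchoose : ((n - 1).choose (j + 1) : ℝ) * (j + 1) = (n - 1).choose j * (n - (j + 1)) := by
    have h := congrArg (Nat.cast : ℕ → ℝ) (Nat.choose_succ_right_eq (n - 1) j)
    push_cast [Nat.cast_sub (by omega : j ≤ n - 1), Nat.cast_sub (by omega : 1 ≤ n)] at h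
    linarith
  rw [esymm_succ_of_eq_off hb ha]
  linear_combination b ^ (j + 1) * hchoose

theorem nonneg_of_esymm_one_two_nonneg (hn : 2 ≤ n) (hb : ∀ i, i ≠ m → l i = b) (ha : l m = a)
    (h₁ : 0 ≤ esymm n 1 l) (h₂ : 0 ≤ esymm n 2 l) : 0 ≤ b := by
  have hσ₁ := succ_mul_esymm_succ_of_eq_off hb ha (j := 0) (by omega)
  have hσ₂ := succ_mul_esymm_succ_of_eq_off hb ha (j := 1) (by omega)
  have hn' : (2 : ℝ) ≤ n := by exact_mod_cast hn
  have hcast : ((n - 1 : ℕ) : ℝ) = n - 1 := by push_cast [Nat.cast_sub (by omega : 1 ≤ n)]; ring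
  simp only [Nat.choose_zero_right, Nat.choose_one_right, hcast] at hσ₁ hσ₂
  norm_num at hσ₁ hσ₂
  by_contra! hneg
  -- `σ₁ ≥ 0` gives `2a + (n-2)b ≥ -n b > 0`, so `2σ₂ = (n-1) b (2a + (n-2)b) < 0`.
  have hsum : 0 < 2 * a + (n - 2) * b := by nlinarith
  nlinarith [mul_pos (mul_pos (by linarith : (0 : ℝ) < n - 1) (neg_pos.2 hneg)) hsum]

theorem add_div_mul_nonneg_of_esymm_nonneg {k : ℕ} (hk : 1 ≤ k) (hkn : k ≤ n)
    (hb : ∀ i, i ≠ m → l i = b) (ha : l m = a) (hb₀ : 0 ≤ b)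
    (h₁ : 0 ≤ esymm n 1 l) (hσ : 0 ≤ esymm n k l) : 0 ≤ a + ((n - k) / k) * b := by
  obtain ⟨j, rfl⟩ : ∃ j, k = j + 1 := ⟨k - 1, by omega⟩
  push_cast
  rcases hb₀.eq_or_lt with rfl | hbpos
  · have hσ₁ := succ_mul_esymm_succ_of_eq_off hb ha (j := 0) (by omega)
    norm_num at hσ₁
    rw [mul_zero, add_zero, ← hσ₁]
    exact h₁
  · have hk := succ_mul_esymm_succ_of_eq_off hb ha (j := j) (by omega)
    have hcoef : 0 < ((n - 1).choose j : ℝ) * b ^ j :=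
      mul_pos (by exact_mod_cast Nat.choose_pos (by omega)) (pow_pos hbpos j)
    have hkey : 0 ≤ ((j : ℝ) + 1) * a + (n - (j + 1)) * b :=
      nonneg_of_mul_nonneg_right (hk ▸ mul_nonneg (by positivity) hσ) hcoef
    rw [show a + (n - (j + 1)) / (j + 1) * b = (((j : ℝ) + 1) * a + (n - (j + 1)) * b) / (j + 1) by
      field_simp]
    positivity

end OneDistinctEntry

/-- For `n/2 < k ≤ n`, if `λ = (b, …, b, a) ∈ Γ̄_k`, then `b ≥ 0` and
`a + ((n-k)/k) b ≥ 0`. -/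
theorem stmt7 (n k : ℕ) (hn : 2 ≤ n) (hk1 : (n : ℝ) / 2 < k) (hk2 : k ≤ n)
    (a b : ℝ) (l : Fin n → ℝ)
    (hb : ∀ i : Fin n, (i : ℕ) < n - 1 → l i = b)
    (ha : l ⟨n - 1, by omega⟩ = a)
    (hl : l ∈ closure (GammaCone n k)) :
    0 ≤ b ∧ 0 ≤ a + (((n : ℝ) - k) / k) * b := by
  have hk : 2 ≤ k := by
    have hn' : (2 : ℝ) ≤ n := by exact_mod_cast hn
    have : (1 : ℝ) < k := by linarith
    exact_mod_cast this
  have hb' : ∀ i, i ≠ ⟨n - 1, by omega⟩ → l i = b := fun i hi =>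
    hb i (by have := i.isLt; have : (i : ℕ) ≠ n - 1 := fun h => hi (Fin.ext h); omega)
  have hσ : ∀ j, 1 ≤ j → j ≤ k → 0 ≤ esymm n j l := fun _ hj hjk =>
    esymm_nonneg_of_mem_closure_gammaCone hl hj hjk
  have hb₀ := nonneg_of_esymm_one_two_nonneg hn hb' ha (hσ 1 le_rfl (by omega)) (hσ 2 one_le_two hk)
  exact ⟨hb₀, add_div_mul_nonneg_of_esymm_nonneg (by omega) hk2 hb' ha hb₀
    (hσ 1 le_rfl (by omega)) (hσ k (by omega) le_rfl)⟩
end
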